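/- If ‖W⁻¹ΔW‖₂ < 1, then the perturbed PGCS equation has a unique solution (ΔX_1, ΔY_1, …, ΔX_p, ΔY_p), and it satisfies ‖Δz‖₂ ≤ ‖W⁻¹(Δg − ΔW z)‖₂ / (1 − ‖W⁻¹ΔW‖₂). -/

import Mathlib

open Matrix
open scoped Kronecker

noncomputable section

/-- column-stacking `vec` of a matrix, indexed by (column, row). -/
def vecM {a b : ℕ} (M : Matrix (Fin a) (Fin b) ℝ) : Fin b × Fin a → ℝ :=
  fun ji => M ji.2 ji.1

/-- Euclidean norm of a finitely-indexed real vector. -/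
def l2norm {ι : Type*} [Fintype ι] (v : ι → ℝ) : ℝ :=
  Real.sqrt (∑ i, v i ^ 2)

/-- Frobenius norm of a real matrix. -/
def frob {ι κ : Type*} [Fintype ι] [Fintype κ] (M : Matrix ι κ ℝ) : ℝ :=
  Real.sqrt (∑ i, ∑ j, M i j ^ 2)

/-- Spectral norm of a real matrix: supremum of `‖M v‖₂` over the closed unit ball. -/
def specNorm {ι κ : Type*} [Fintype ι] [Fintype κ] (M : Matrix ι κ ℝ) : ℝ :=
  sSup ((fun v => l2norm (M.mulVec v)) '' {v | l2norm v ≤ 1})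

/-- sup-norm (`‖·‖∞`) of a finitely-indexed real vector. -/
def linf {ι : Type*} [Fintype ι] (v : ι → ℝ) : ℝ := ⨆ i, |v i|

/-- max-row-sum (∞-operator) norm of a real matrix. -/
def rowSumNorm {ι κ : Type*} [Fintype ι] [Fintype κ] (M : Matrix ι κ ℝ) : ℝ :=
  ⨆ i, ∑ j, |M i j|

/-- max-norm (`‖·‖_max`) of a real matrix. -/
def maxNorm {ι κ : Type*} [Fintype ι] [Fintype κ] (M : Matrix ι κ ℝ) : ℝ :=
  ⨆ i, ⨆ j, |M i j|

/-- entrywise absolute value of a matrix. -/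
def matAbs {ι κ : Type*} (M : Matrix ι κ ℝ) : Matrix ι κ ℝ := M.map (fun x => |x|)

/-- spectral radius (maximum modulus of the complex eigenvalues) of a real square matrix. -/
def specRad {ι : Type*} [Fintype ι] [DecidableEq ι] (M : Matrix ι ι ℝ) : ENNReal :=
  spectralRadius ℂ (M.map (fun x => (x : ℂ)))

/-- index type for the stacked vector `z = (vec X₁; vec Y₁; …; vec X_p; vec Y_p)`:
component `(k, 0, ·)` holds `vec X_k` and `(k, 1, ·)` holds `vec Y_k`. -/
abbrev BIdx (m n p : ℕ) := Fin p × Fin 2 × Fin n × Fin m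

/-- index type for the vec'd data `(vec A_k; vec B_k; vec E_k; vec C_k; vec D_k; vec F_k)`
of one period. -/
abbrev CIdx (m n : ℕ) :=
  (Fin m × Fin m) ⊕ (Fin n × Fin n) ⊕ (Fin n × Fin m) ⊕
  (Fin m × Fin m) ⊕ (Fin n × Fin n) ⊕ (Fin n × Fin m)

variable {m n p : ℕ}

/-- the stacked vector `(vec X₁; vec Y₁; …; vec X_p; vec Y_p)`. -/
def bigVec (X Y : Fin p → Matrix (Fin m) (Fin n) ℝ) : BIdx m n p → ℝ :=
  fun x => if x.2.1 = 0 then vecM (X x.1) x.2.2 else vecM (Y x.1) x.2.2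

/-- the coefficient matrix `W` of the PGCS equation: block row `(k,0)` has `Iₙ ⊗ A_k` in
block column `(k,0)` and `−(B_kᵀ ⊗ Iₘ)` in block column `(k,1)`; block row `(k,1)` has
`Iₙ ⊗ C_k` in block column `(k+1 mod p, 0)` and `−(D_kᵀ ⊗ Iₘ)` in block column `(k,1)`. -/
def Wmat [NeZero p] (A C : Fin p → Matrix (Fin m) (Fin m) ℝ)
    (B D : Fin p → Matrix (Fin n) (Fin n) ℝ) :
    Matrix (BIdx m n p) (BIdx m n p) ℝ :=
  Matrix.of fun x y =>
    if x.2.1 = 0 then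
      (if y.1 = x.1 ∧ y.2.1 = 0 then
        ((1 : Matrix (Fin n) (Fin n) ℝ) ⊗ₖ A x.1) x.2.2 y.2.2 else 0) +
      (if y.1 = x.1 ∧ y.2.1 = 1 then
        (-((B x.1)ᵀ ⊗ₖ (1 : Matrix (Fin m) (Fin m) ℝ))) x.2.2 y.2.2 else 0)
    else
      (if y.1 = x.1 + 1 ∧ y.2.1 = 0 then
        ((1 : Matrix (Fin n) (Fin n) ℝ) ⊗ₖ C x.1) x.2.2 y.2.2 else 0) +
      (if y.1 = x.1 ∧ y.2.1 = 1 then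
        (-((D x.1)ᵀ ⊗ₖ (1 : Matrix (Fin m) (Fin m) ℝ))) x.2.2 y.2.2 else 0)

/-- the block-diagonal matrix `Ĥ = diag(Ĥ⁽¹⁾,…,Ĥ⁽ᵖ⁾)` (also `H₁`, `H₂`) with block
`Ĥ⁽ᵏ⁾ = [α_k (X_kᵀ ⊗ Iₘ), −β_k (Iₙ ⊗ Y_k), −γ_k I, 0, 0, 0;
        0, 0, 0, ζ_k (X_{k+1}ᵀ ⊗ Iₘ), −τ_k (Iₙ ⊗ Y_k), −δ_k I]`. -/
def Hmat [NeZero p] (Xh Yh : Fin p → Matrix (Fin m) (Fin n) ℝ)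
    (al be ga ze ta de : Fin p → ℝ) :
    Matrix (BIdx m n p) (Fin p × CIdx m n) ℝ :=
  Matrix.of fun x y =>
    if y.1 = x.1 then
      if x.2.1 = 0 then
        (match y.2 with
        | Sum.inl a => al x.1 * (((Xh x.1)ᵀ ⊗ₖ (1 : Matrix (Fin m) (Fin m) ℝ)) x.2.2 a)
        | Sum.inr (Sum.inl b) =>
            -(be x.1 * (((1 : Matrix (Fin n) (Fin n) ℝ) ⊗ₖ Yh x.1) x.2.2 b))
        | Sum.inr (Sum.inr (Sum.inl e)) =>
            -(ga x.1 * ((1 : Matrix (Fin n × Fin m) (Fin n × Fin m) ℝ) x.2.2 e))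
        | _ => 0)
      else
        (match y.2 with
        | Sum.inr (Sum.inr (Sum.inr (Sum.inl c))) =>
            ze x.1 * (((Xh (x.1 + 1))ᵀ ⊗ₖ (1 : Matrix (Fin m) (Fin m) ℝ)) x.2.2 c)
        | Sum.inr (Sum.inr (Sum.inr (Sum.inr (Sum.inl d)))) =>
            -(ta x.1 * (((1 : Matrix (Fin n) (Fin n) ℝ) ⊗ₖ Yh x.1) x.2.2 d))
        | Sum.inr (Sum.inr (Sum.inr (Sum.inr (Sum.inr f)))) =>
            -(de x.1 * ((1 : Matrix (Fin n × Fin m) (Fin n × Fin m) ℝ) x.2.2 f))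
        | _ => 0)
    else 0

/-- the parameter vector `t = (vec A₁; vec B₁; vec E₁; vec C₁; vec D₁; vec F₁; …)`. -/
def tvec (A C : Fin p → Matrix (Fin m) (Fin m) ℝ)
    (B D : Fin p → Matrix (Fin n) (Fin n) ℝ)
    (E F : Fin p → Matrix (Fin m) (Fin n) ℝ) : Fin p × CIdx m n → ℝ :=
  fun y =>
    match y.2 with
    | Sum.inl a => vecM (A y.1) a
    | Sum.inr (Sum.inl b) => vecM (B y.1) b
    | Sum.inr (Sum.inr (Sum.inl e)) => vecM (E y.1) e
    | Sum.inr (Sum.inr (Sum.inr (Sum.inl c))) => vecM (C y.1) c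
    | Sum.inr (Sum.inr (Sum.inr (Sum.inr (Sum.inl d)))) => vecM (D y.1) d
    | Sum.inr (Sum.inr (Sum.inr (Sum.inr (Sum.inr f)))) => vecM (F y.1) f

/-- the matrix `A_k` encoded in a parameter vector `t`. -/
def pA (t : Fin p × CIdx m n → ℝ) (k : Fin p) : Matrix (Fin m) (Fin m) ℝ :=
  Matrix.of fun i j => t (k, Sum.inl (j, i))

/-- the matrix `B_k` encoded in a parameter vector `t`. -/
def pB (t : Fin p × CIdx m n → ℝ) (k : Fin p) : Matrix (Fin n) (Fin n) ℝ :=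
  Matrix.of fun i j => t (k, Sum.inr (Sum.inl (j, i)))

/-- the matrix `E_k` encoded in a parameter vector `t`. -/
def pE (t : Fin p × CIdx m n → ℝ) (k : Fin p) : Matrix (Fin m) (Fin n) ℝ :=
  Matrix.of fun i j => t (k, Sum.inr (Sum.inr (Sum.inl (j, i))))

/-- the matrix `C_k` encoded in a parameter vector `t`. -/
def pC (t : Fin p × CIdx m n → ℝ) (k : Fin p) : Matrix (Fin m) (Fin m) ℝ :=
  Matrix.of fun i j => t (k, Sum.inr (Sum.inr (Sum.inr (Sum.inl (j, i)))))

/-- the matrix `D_k` encoded in a parameter vector `t`. -/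
def pD (t : Fin p × CIdx m n → ℝ) (k : Fin p) : Matrix (Fin n) (Fin n) ℝ :=
  Matrix.of fun i j => t (k, Sum.inr (Sum.inr (Sum.inr (Sum.inr (Sum.inl (j, i))))))

/-- the matrix `F_k` encoded in a parameter vector `t`. -/
def pF (t : Fin p × CIdx m n → ℝ) (k : Fin p) : Matrix (Fin m) (Fin n) ℝ :=
  Matrix.of fun i j => t (k, Sum.inr (Sum.inr (Sum.inr (Sum.inr (Sum.inr (j, i))))))

/-- the matrix `W(t)` built from the parameter vector `t`. -/
def Wt [NeZero p] (t : Fin p × CIdx m n → ℝ) : Matrix (BIdx m n p) (BIdx m n p) ℝ :=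
  Wmat (pA t) (pC t) (pB t) (pD t)

/-- the right-hand side `g(t) = (vec E₁; vec F₁; …; vec E_p; vec F_p)`. -/
def gt (t : Fin p × CIdx m n → ℝ) : BIdx m n p → ℝ := bigVec (pE t) (pF t)

/-- the set of parameters for which `W(t)` is invertible. -/
def Dset (m n p : ℕ) [NeZero p] : Set (Fin p × CIdx m n → ℝ) := {t | IsUnit (Wt t)}

/-- the solution map `Ψ(t) = W(t)⁻¹ g(t)`. -/
def Psi [NeZero p] (t : Fin p × CIdx m n → ℝ) : BIdx m n p → ℝ := (Wt t)⁻¹.mulVec (gt t)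

/-- the solution matrix `X_k` read off from `Ψ(t)`. -/
def Xsol [NeZero p] (t : Fin p × CIdx m n → ℝ) (k : Fin p) : Matrix (Fin m) (Fin n) ℝ :=
  Matrix.of fun i j => Psi t (k, (0 : Fin 2), (j, i))

/-- the solution matrix `Y_k` read off from `Ψ(t)`. -/
def Ysol [NeZero p] (t : Fin p × CIdx m n → ℝ) (k : Fin p) : Matrix (Fin m) (Fin n) ℝ :=
  Matrix.of fun i j => Psi t (k, (1 : Fin 2), (j, i))

/-- the matrix `H₂(t)` (all tolerances equal to one), built from the solution `Ψ(t)`. -/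
def H2t [NeZero p] (t : Fin p × CIdx m n → ℝ) : Matrix (BIdx m n p) (Fin p × CIdx m n) ℝ :=
  Hmat (Xsol t) (Ysol t) 1 1 1 1 1 1

/-- the componentwise relative ball `B⁰(a, ε)`. -/
def B0 {ι : Type*} (a : ι → ℝ) (ε : ℝ) : Set (ι → ℝ) := {x | ∀ i, |x i - a i| ≤ ε * |a i|}

/-- the componentwise distance `d(x, a)`. -/
def cdist {ι : Type*} [Fintype ι] (x a : ι → ℝ) : ℝ :=
  ⨆ i, if a i = 0 then |x i - a i| else |x i - a i| / |a i|

/-!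
Vectorising turns the PGCS equation into `W z = g`; subtracting this from the vectorised perturbed
equation leaves `(W + ΔW) Δz = Δg − ΔW z`. Since `W + ΔW = W (I + W⁻¹ΔW)` and `‖W⁻¹ΔW‖₂ < 1`, the
Neumann series makes `W + ΔW` invertible, which gives existence and uniqueness. Multiplying by
`W⁻¹` gives `Δz = W⁻¹(Δg − ΔW z) − W⁻¹ΔW Δz`, and the triangle inequality yields the bound.
-/

open scoped Matrix.Norms.L2Operator

section L2Norm

variable {ι κ : Type*} [Fintype ι] [Fintype κ]

lemma l2norm_eq_norm_toLp (v : ι → ℝ) : l2norm v = ‖WithLp.toLp 2 v‖ := by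
  simp [l2norm, EuclideanSpace.norm_eq, sq_abs]

lemma specNorm_eq_l2_opNorm [DecidableEq κ] (M : Matrix ι κ ℝ) : specNorm M = ‖M‖ := by
  rw [l2_opNorm_def, ← ContinuousLinearMap.sSup_unitClosedBall_eq_norm, specNorm]
  congr 1
  ext r
  constructor
  · rintro ⟨v, hv, rfl⟩
    exact ⟨WithLp.toLp 2 v, by simpa [l2norm_eq_norm_toLp] using hv, (l2norm_eq_norm_toLp _).symm⟩
  · rintro ⟨x, hx, rfl⟩
    exact ⟨x.ofLp, by simpa [l2norm_eq_norm_toLp] using hx, l2norm_eq_norm_toLp (M *ᵥ x.ofLp)⟩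

lemma l2norm_mulVec_le [DecidableEq κ] (M : Matrix ι κ ℝ) (v : κ → ℝ) :
    l2norm (M *ᵥ v) ≤ specNorm M * l2norm v := by
  rw [specNorm_eq_l2_opNorm, l2norm_eq_norm_toLp, l2norm_eq_norm_toLp]
  exact M.l2_opNorm_mulVec (WithLp.toLp 2 v)

lemma l2norm_sub_le (v w : ι → ℝ) : l2norm (v - w) ≤ l2norm v + l2norm w := by
  simpa only [l2norm_eq_norm_toLp, WithLp.toLp_sub] using norm_sub_le _ _

end L2Norm

lemma add_mulVec_add_eq_add_iff {ι R : Type*} [Fintype ι] [CommRing R] {W dW : Matrix ι ι R}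
    {z g dz dg : ι → R} (hz : W *ᵥ z = g) :
    (W + dW) *ᵥ (z + dz) = g + dg ↔ (W + dW) *ᵥ dz = dg - dW *ᵥ z := by
  rw [mulVec_add, add_mulVec, hz]
  constructor <;> intro h <;> linear_combination h

section Perturbation

variable {ι : Type*} [Fintype ι] [DecidableEq ι]

lemma l2norm_le_div_one_sub_specNorm {K : Matrix ι ι ℝ} (hK : specNorm K < 1) {z y : ι → ℝ}
    (h : z + K *ᵥ z = y) : l2norm z ≤ l2norm y / (1 - specNorm K) := by
  have hz : l2norm z ≤ l2norm y + specNorm K * l2norm z :=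
    calc l2norm z = l2norm (y - K *ᵥ z) := by rw [← h, add_sub_cancel_right]
      _ ≤ l2norm y + l2norm (K *ᵥ z) := l2norm_sub_le _ _
      _ ≤ l2norm y + specNorm K * l2norm z := by gcongr; exact l2norm_mulVec_le K z
  rw [le_div_iff₀ (sub_pos.2 hK)]
  linarith

variable {W dW : Matrix ι ι ℝ}

lemma isUnit_add_of_specNorm_inv_mul_lt_one (hW : IsUnit W) (h : specNorm (W⁻¹ * dW) < 1) :
    IsUnit (W + dW) := by
  have hK : IsUnit (1 + W⁻¹ * dW) := by
    rw [← sub_neg_eq_add]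
    exact isUnit_one_sub_of_norm_lt_one (by rwa [norm_neg, ← specNorm_eq_l2_opNorm])
  have hfactor : W + dW = W * (1 + W⁻¹ * dW) := by
    rw [Matrix.mul_add, Matrix.mul_one,
      mul_nonsing_inv_cancel_left W dW ((isUnit_iff_isUnit_det W).1 hW)]
  exact hfactor ▸ hW.mul hK

lemma l2norm_le_of_perturbed_mulVec_eq (hW : IsUnit W) (h : specNorm (W⁻¹ * dW) < 1) {z r : ι → ℝ}
    (hz : (W + dW) *ᵥ z = r) : l2norm z ≤ l2norm (W⁻¹ *ᵥ r) / (1 - specNorm (W⁻¹ * dW)) := by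
  refine l2norm_le_div_one_sub_specNorm h ?_
  rw [← hz, mulVec_mulVec, Matrix.mul_add, nonsing_inv_mul _ ((isUnit_iff_isUnit_det W).1 hW),
    add_mulVec, one_mulVec]

end Perturbation

lemma sum_ite_fst_eq_and_fst_snd_eq {ι : Type*} [Fintype ι] (k : Fin p) (t : Fin 2)
    (f : Fin p × Fin 2 × ι → ℝ) :
    ∑ y, (if y.1 = k ∧ y.2.1 = t then f y else 0) = ∑ d, f (k, t, d) := by
  fin_cases t <;> simp [Fintype.sum_prod_type, ite_and, Finset.sum_ite_irrel]

def bigVecEquiv :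
    (Fin p → Matrix (Fin m) (Fin n) ℝ) × (Fin p → Matrix (Fin m) (Fin n) ℝ) ≃ (BIdx m n p → ℝ)
    where
  toFun S := bigVec S.1 S.2
  invFun v := (fun k => of fun i j => v (k, 0, j, i), fun k => of fun i j => v (k, 1, j, i))
  left_inv S := by ext <;> simp [bigVec, vecM]
  right_inv v := by
    ext ⟨k, s, j, i⟩
    fin_cases s <;> simp [bigVec, vecM]

lemma bigVec_inj {X Y X' Y' : Fin p → Matrix (Fin m) (Fin n) ℝ} :
    bigVec X Y = bigVec X' Y' ↔ X = X' ∧ Y = Y' :=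
  (bigVecEquiv.injective.eq_iff (a := (X, Y)) (b := (X', Y'))).trans Prod.ext_iff

lemma bigVec_add (X Y dX dY : Fin p → Matrix (Fin m) (Fin n) ℝ) :
    bigVec (X + dX) (Y + dY) = bigVec X Y + bigVec dX dY := by
  ext ⟨k, s, c⟩
  by_cases hs : s = 0 <;> simp [bigVec, vecM, hs]

section Wmat

variable [NeZero p] (A C : Fin p → Matrix (Fin m) (Fin m) ℝ)
  (B D : Fin p → Matrix (Fin n) (Fin n) ℝ)

lemma Wmat_mulVec_apply_zero (v : BIdx m n p → ℝ) (k : Fin p) (c : Fin n × Fin m) :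
    (Wmat A C B D *ᵥ v) (k, 0, c) =
      ((1 ⊗ₖ A k) *ᵥ fun d => v (k, 0, d)) c - ((B k)ᵀ ⊗ₖ 1 *ᵥ fun d => v (k, 1, d)) c := by
  simp only [mulVec, dotProduct, Wmat, of_apply, add_mul, ite_mul, zero_mul, if_pos,
    Finset.sum_add_distrib, sum_ite_fst_eq_and_fst_snd_eq, Matrix.neg_apply, neg_mul,
    Finset.sum_neg_distrib, sub_eq_add_neg]

lemma Wmat_mulVec_apply_one (v : BIdx m n p → ℝ) (k : Fin p) (c : Fin n × Fin m) :
    (Wmat A C B D *ᵥ v) (k, 1, c) =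
      ((1 ⊗ₖ C k) *ᵥ fun d => v (k + 1, 0, d)) c - ((D k)ᵀ ⊗ₖ 1 *ᵥ fun d => v (k, 1, d)) c := by
  simp only [mulVec, dotProduct, Wmat, of_apply, add_mul, ite_mul, zero_mul, one_ne_zero,
    if_false, Finset.sum_add_distrib, sum_ite_fst_eq_and_fst_snd_eq, Matrix.neg_apply, neg_mul,
    Finset.sum_neg_distrib, sub_eq_add_neg]

lemma Wmat_mulVec_bigVec (X Y : Fin p → Matrix (Fin m) (Fin n) ℝ) :
    Wmat A C B D *ᵥ bigVec X Y =
      bigVec (fun k => A k * X k - Y k * B k) (fun k => C k * X (k + 1) - Y k * D k) := by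
  have hX : ∀ k, (fun d => bigVec X Y (k, 0, d)) = (X k).vec := fun _ => rfl
  have hY : ∀ k, (fun d => bigVec X Y (k, 1, d)) = (Y k).vec := fun _ => rfl
  ext ⟨k, s, c⟩
  revert s
  refine Fin.forall_fin_two.2 ⟨?_, ?_⟩
  · rw [Wmat_mulVec_apply_zero, hX, hY, kronecker_mulVec_vec, kronecker_mulVec_vec]
    simp [bigVec, vecM, Matrix.vec]
  · rw [Wmat_mulVec_apply_one, hX, hY, kronecker_mulVec_vec, kronecker_mulVec_vec]
    simp [bigVec, vecM, Matrix.vec]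

lemma Wmat_add (dA dC : Fin p → Matrix (Fin m) (Fin m) ℝ)
    (dB dD : Fin p → Matrix (Fin n) (Fin n) ℝ) :
    Wmat (A + dA) (C + dC) (B + dB) (D + dD) = Wmat A C B D + Wmat dA dC dB dD := by
  ext x y
  simp only [Wmat, of_apply, Matrix.add_apply, Pi.add_apply, kroneckerMap_apply, Matrix.neg_apply,
    transpose_apply]
  split_ifs <;> ring

lemma pgcs_iff_Wmat_mulVec_eq (E F X Y : Fin p → Matrix (Fin m) (Fin n) ℝ) :
    (∀ k, A k * X k - Y k * B k = E k ∧ C k * X (k + 1) - Y k * D k = F k) ↔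
      Wmat A C B D *ᵥ bigVec X Y = bigVec E F := by
  rw [Wmat_mulVec_bigVec, bigVec_inj, funext_iff, funext_iff, ← forall_and]

lemma perturbed_pgcs_iff {dA dC : Fin p → Matrix (Fin m) (Fin m) ℝ}
    {dB dD : Fin p → Matrix (Fin n) (Fin n) ℝ} {E F dE dF X Y : Fin p → Matrix (Fin m) (Fin n) ℝ}
    (hsol : ∀ k, A k * X k - Y k * B k = E k ∧ C k * X (k + 1) - Y k * D k = F k)
    (dX dY : Fin p → Matrix (Fin m) (Fin n) ℝ) :
    (∀ k, (A k + dA k) * (X k + dX k) - (Y k + dY k) * (B k + dB k) = E k + dE k ∧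
        (C k + dC k) * (X (k + 1) + dX (k + 1)) - (Y k + dY k) * (D k + dD k) = F k + dF k) ↔
      (Wmat A C B D + Wmat dA dC dB dD) *ᵥ bigVec dX dY =
        bigVec dE dF - Wmat dA dC dB dD *ᵥ bigVec X Y := by
  refine (pgcs_iff_Wmat_mulVec_eq (A + dA) (C + dC) (B + dB) (D + dD) (E + dE) (F + dF)
    (X + dX) (Y + dY)).trans ?_
  rw [Wmat_add, bigVec_add, bigVec_add]
  exact add_mulVec_add_eq_add_iff ((pgcs_iff_Wmat_mulVec_eq A C B D E F X Y).1 hsol)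

end Wmat

theorem perturbed_unique_and_bound_general (m n p : ℕ) [NeZero p]
    (A C dA dC : Fin p → Matrix (Fin m) (Fin m) ℝ)
    (B D dB dD : Fin p → Matrix (Fin n) (Fin n) ℝ)
    (E F dE dF X Y : Fin p → Matrix (Fin m) (Fin n) ℝ)
    (hW : IsUnit (Wmat A C B D))
    (hsol : ∀ k : Fin p, A k * X k - Y k * B k = E k ∧ C k * X (k + 1) - Y k * D k = F k)
    (hpert : specNorm ((Wmat A C B D)⁻¹ * Wmat dA dC dB dD) < 1) :
    (∃! S : (Fin p → Matrix (Fin m) (Fin n) ℝ) × (Fin p → Matrix (Fin m) (Fin n) ℝ),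
        ∀ k : Fin p,
          (A k + dA k) * (X k + S.1 k) - (Y k + S.2 k) * (B k + dB k) = E k + dE k ∧
          (C k + dC k) * (X (k + 1) + S.1 (k + 1)) - (Y k + S.2 k) * (D k + dD k) =
            F k + dF k) ∧
      ∀ dX dY : Fin p → Matrix (Fin m) (Fin n) ℝ,
        (∀ k : Fin p,
          (A k + dA k) * (X k + dX k) - (Y k + dY k) * (B k + dB k) = E k + dE k ∧
          (C k + dC k) * (X (k + 1) + dX (k + 1)) - (Y k + dY k) * (D k + dD k) =
            F k + dF k) →
        l2norm (bigVec dX dY) ≤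
          l2norm ((Wmat A C B D)⁻¹.mulVec
              (bigVec dE dF - (Wmat dA dC dB dD).mulVec (bigVec X Y))) /
            (1 - specNorm ((Wmat A C B D)⁻¹ * Wmat dA dC dB dD)) := by
  have hunit := isUnit_add_of_specNorm_inv_mul_lt_one hW hpert
  refine ⟨?_, fun dX dY h => l2norm_le_of_perturbed_mulVec_eq hW hpert
    ((perturbed_pgcs_iff A C B D hsol dX dY).1 h)⟩
  refine (bigVecEquiv.existsUnique_congr (q := fun v => (Wmat A C B D + Wmat dA dC dB dD) *ᵥ v =
    bigVec dE dF - Wmat dA dC dB dD *ᵥ bigVec X Y)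
    fun S => perturbed_pgcs_iff A C B D hsol S.1 S.2).2 ?_
  exact (Function.Bijective.existsUnique
    ⟨mulVec_injective_iff_isUnit.2 hunit, mulVec_surjective_iff_isUnit.2 hunit⟩) _

/-- if `‖W⁻¹ ΔW‖₂ < 1` then the perturbed PGCS equation has a unique
solution and `‖Δz‖₂ ≤ ‖W⁻¹(Δg − ΔW z)‖₂ / (1 − ‖W⁻¹ ΔW‖₂)`. -/
theorem perturbed_unique_and_bound (m n p : ℕ) [NeZero m] [NeZero n] [NeZero p]
    (A C dA dC : Fin p → Matrix (Fin m) (Fin m) ℝ)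
    (B D dB dD : Fin p → Matrix (Fin n) (Fin n) ℝ)
    (E F dE dF X Y : Fin p → Matrix (Fin m) (Fin n) ℝ)
    (hW : IsUnit (Wmat A C B D))
    (hsol : ∀ k : Fin p, A k * X k - Y k * B k = E k ∧ C k * X (k + 1) - Y k * D k = F k)
    (hpert : specNorm ((Wmat A C B D)⁻¹ * Wmat dA dC dB dD) < 1) :
    (∃! S : (Fin p → Matrix (Fin m) (Fin n) ℝ) × (Fin p → Matrix (Fin m) (Fin n) ℝ),
        ∀ k : Fin p,
          (A k + dA k) * (X k + S.1 k) - (Y k + S.2 k) * (B k + dB k) = E k + dE k ∧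
          (C k + dC k) * (X (k + 1) + S.1 (k + 1)) - (Y k + S.2 k) * (D k + dD k) =
            F k + dF k) ∧
      ∀ dX dY : Fin p → Matrix (Fin m) (Fin n) ℝ,
        (∀ k : Fin p,
          (A k + dA k) * (X k + dX k) - (Y k + dY k) * (B k + dB k) = E k + dE k ∧
          (C k + dC k) * (X (k + 1) + dX (k + 1)) - (Y k + dY k) * (D k + dD k) =
            F k + dF k) →
        l2norm (bigVec dX dY) ≤
          l2norm ((Wmat A C B D)⁻¹.mulVec
              (bigVec dE dF - (Wmat dA dC dB dD).mulVec (bigVec X Y))) /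
            (1 - specNorm ((Wmat A C B D)⁻¹ * Wmat dA dC dB dD)) :=
  perturbed_unique_and_bound_general m n p A C dA dC B D dB dD E F dE dF X Y hW hsol hpert
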